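/- The limit as n → ∞ of (1/n)·∑_{k=1}^{n} |μ(k)| equals 6/π². -/

import Mathlib

/-!
Write `k ≥ 1` as `b² a` with `a` squarefree, and `d² ∣ k` iff `d ∣ b`; so Möbius inversion
gives `|μ k| = ∑_{d² ∣ k} μ d`. Summing over `k ≤ n` yields
`∑_{k ≤ n} |μ k| = ∑_{d ≤ √n} μ d ⌊n / d²⌋`, which differs from `n ∑_{d ≤ √n} μ d / d²` by at
most `√n`. Finally `∑ μ d / d² = 1 / ζ(2) = 6 / π²`.
-/

open Nat ArithmeticFunction Finset Filter Real
open scoped ArithmeticFunction.Moebius ArithmeticFunction.zeta LSeries.notation Topology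

namespace Nat

theorem dvd_of_sq_dvd_sq_mul_squarefree {a b d : ℕ} (ha : Squarefree a)
    (h : d ^ 2 ∣ b ^ 2 * a) : d ∣ b := by
  rcases eq_or_ne b 0 with rfl | hb
  · exact dvd_zero d
  obtain ⟨g, d', b', hg, hcop, rfl, rfl⟩ :=
    Nat.exists_coprime' (Nat.gcd_pos_of_pos_right d (Nat.pos_of_ne_zero hb))
  rw [mul_pow, mul_pow, mul_right_comm, Nat.mul_dvd_mul_iff_right (by positivity)] at h
  have hd' : d' * d' ∣ a := sq d' ▸ ((hcop.pow 2 2).dvd_of_dvd_mul_left h)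
  rw [Nat.isUnit_iff.mp (ha d' hd'), one_mul]
  exact dvd_mul_left g b'

theorem abs_cast_div_sub_div_le_one {K : Type*} [Field K] [LinearOrder K] [IsStrictOrderedRing K]
    [FloorSemiring K] (m q : ℕ) : |((m / q : ℕ) : K) - m / q| ≤ 1 := by
  rw [← Nat.floor_div_eq_div (K := K), abs_sub_le_iff]
  have hnonneg : (0 : K) ≤ m / q := by positivity
  exact ⟨by linarith [Nat.floor_le hnonneg], by linarith [Nat.lt_floor_add_one ((m : K) / q)]⟩

theorem tendsto_sqrt_atTop : Tendsto Nat.sqrt atTop atTop :=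
  tendsto_atTop_atTop.2 fun b => ⟨b * b, fun _ h => Nat.le_sqrt.2 h⟩

theorem tendsto_sqrt_div_atTop_nhds_zero :
    Tendsto (fun n : ℕ => (n.sqrt : ℝ) / n) atTop (𝓝 0) := by
  have hle (n : ℕ) : (n.sqrt : ℝ) / n ≤ 1 / n.sqrt := by
    rcases eq_or_ne n.sqrt 0 with h | h
    · simp [h]
    have hn : 0 < n := Nat.sqrt_pos.mp (Nat.pos_of_ne_zero h)
    rw [div_le_div_iff₀ (by positivity) (by positivity), one_mul, ← sq]
    exact_mod_cast Nat.sqrt_le' n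
  exact squeeze_zero (fun n => by positivity) hle
    (tendsto_one_div_atTop_nhds_zero_nat.comp tendsto_sqrt_atTop)

end Nat

theorem HasSum.tendsto_sum_Icc_one {M : Type*} [AddCommMonoid M] [TopologicalSpace M] {f : ℕ → M}
    {a : M} (hf : HasSum f a) (h0 : f 0 = 0) :
    Tendsto (fun n => ∑ i ∈ Icc 1 n, f i) atTop (𝓝 a) := by
  refine (hf.tendsto_sum_nat.comp (tendsto_add_atTop_nat 1)).congr fun n => ?_
  rw [Function.comp_apply, range_eq_Ico, sum_eq_sum_Ico_succ_bot n.succ_pos, h0, _root_.zero_add]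
  rfl

namespace ArithmeticFunction

theorem sum_divisors_moebius (n : ℕ) : ∑ d ∈ n.divisors, μ d = if n = 1 then 1 else 0 := by
  rw [← coe_mul_zeta_apply, moebius_mul_coe_zeta, one_apply]

theorem abs_moebius_eq_sum_sq_dvd {k : ℕ} (hk : k ≠ 0) :
    |μ k| = ∑ d ∈ k.divisors with d ^ 2 ∣ k, μ d := by
  obtain ⟨a, b, -, hb, rfl, hsq⟩ := Nat.sq_mul_squarefree_of_pos (Nat.pos_of_ne_zero hk)
  have hfilter : {d ∈ (b ^ 2 * a).divisors | d ^ 2 ∣ b ^ 2 * a} = b.divisors := by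
    ext d
    simp only [mem_filter, mem_divisors]
    constructor
    · rintro ⟨-, hd⟩
      exact ⟨Nat.dvd_of_sq_dvd_sq_mul_squarefree hsq hd, hb.ne'⟩
    · rintro ⟨hd, -⟩
      have hd2 : d ^ 2 ∣ b ^ 2 * a := (pow_dvd_pow_of_dvd hd 2).mul_right a
      exact ⟨⟨(dvd_pow_self d two_ne_zero).trans hd2, hk⟩, hd2⟩
  have hb1 : Squarefree (b ^ 2 * a) ↔ b = 1 := by
    refine ⟨fun h => Nat.isUnit_iff.mp (h b ⟨a, by ring⟩), ?_⟩
    rintro rfl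
    simpa using hsq
  rw [hfilter, sum_divisors_moebius, abs_moebius]
  exact if_congr hb1 rfl rfl

theorem sum_Icc_abs_moebius_eq_sum_moebius_mul_div_sq (n : ℕ) :
    ∑ k ∈ Icc 1 n, |μ k| = ∑ d ∈ Icc 1 n.sqrt, μ d * (n / d ^ 2 : ℕ) := by
  calc ∑ k ∈ Icc 1 n, |μ k| = ∑ k ∈ Icc 1 n, ∑ d ∈ Icc 1 n.sqrt with d ^ 2 ∣ k, μ d := by
        refine sum_congr rfl fun k hk => ?_
        rw [mem_Icc] at hk
        rw [abs_moebius_eq_sum_sq_dvd (by omega)]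
        refine sum_congr (Finset.ext fun d => ?_) fun _ _ => rfl
        simp only [mem_filter, mem_divisors, mem_Icc, Nat.le_sqrt, ← sq]
        constructor
        · rintro ⟨-, hd⟩
          have hdk := Nat.le_of_dvd (by omega) hd
          have hd0 : d ≠ 0 := by rintro rfl; simp at hd; omega
          exact ⟨⟨by omega, by omega⟩, hd⟩
        · rintro ⟨-, hd⟩
          exact ⟨⟨(dvd_pow_self d two_ne_zero).trans hd, by omega⟩, hd⟩
    _ = ∑ d ∈ Icc 1 n.sqrt, ∑ k ∈ Icc 1 n with d ^ 2 ∣ k, μ d := by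
        simp only [sum_filter]; exact sum_comm
    _ = ∑ d ∈ Icc 1 n.sqrt, μ d * (n / d ^ 2 : ℕ) := by
        refine sum_congr rfl fun d _ => ?_
        rw [sum_const, ← Nat.Ioc_filter_dvd_card_eq_div, nsmul_eq_mul, mul_comm]
        rfl

theorem hasSum_moebius_div_sq : HasSum (fun d : ℕ => (μ d : ℝ) / d ^ 2) (6 / π ^ 2) := by
  have hs : 1 < (2 : ℂ).re := by norm_num
  have hL : L ↗μ 2 = ((6 / π ^ 2 : ℝ) : ℂ) := by
    have h := LSeries_zeta_mul_Lseries_moebius hs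
    rw [LSeries_zeta_eq_riemannZeta hs, riemannZeta_two] at h
    have hπ : (π : ℂ) ≠ 0 := by exact_mod_cast pi_ne_zero
    push_cast
    rw [eq_div_iff (by simp [hπ])]
    linear_combination 6 * h
  have h := (LSeriesSummable_moebius_iff.mpr hs).LSeriesHasSum
  rw [hL] at h
  refine Complex.hasSum_ofReal.mp (h.congr_fun fun d => ?_)
  rcases eq_or_ne d 0 with rfl | hd
  · simp
  · simp [LSeries.term_of_ne_zero hd]

theorem abs_sum_Icc_abs_moebius_div_sub_le (n : ℕ) :
    |(∑ k ∈ Icc 1 n, |(μ k : ℝ)|) / n - ∑ d ∈ Icc 1 n.sqrt, (μ d : ℝ) / d ^ 2| ≤ n.sqrt / n := by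
  rcases eq_or_ne n 0 with rfl | hn
  · simp
  have hcount :
      ∑ k ∈ Icc 1 n, |(μ k : ℝ)| = ∑ d ∈ Icc 1 n.sqrt, (μ d : ℝ) * (n / d ^ 2 : ℕ) := by
    have h := congrArg (Int.cast : ℤ → ℝ) (sum_Icc_abs_moebius_eq_sum_moebius_mul_div_sq n)
    push_cast at h
    exact h
  have hdiff : (∑ k ∈ Icc 1 n, |(μ k : ℝ)|) / n - ∑ d ∈ Icc 1 n.sqrt, (μ d : ℝ) / d ^ 2 =
      (∑ d ∈ Icc 1 n.sqrt, (μ d : ℝ) * (((n / d ^ 2 : ℕ) : ℝ) - n / d ^ 2)) / n := by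
    have hn' : (n : ℝ) ≠ 0 := by exact_mod_cast hn
    rw [hcount, sum_div, sum_div, ← sum_sub_distrib]
    refine sum_congr rfl fun d _ => ?_
    field_simp
  rw [hdiff, abs_div, Nat.abs_cast]
  gcongr
  calc |∑ d ∈ Icc 1 n.sqrt, (μ d : ℝ) * (((n / d ^ 2 : ℕ) : ℝ) - n / d ^ 2)|
      ≤ ∑ d ∈ Icc 1 n.sqrt, (1 : ℝ) := by
        refine (abs_sum_le_sum_abs _ _).trans (sum_le_sum fun d _ => ?_)
        rw [abs_mul, ← one_mul 1]
        exact mul_le_mul (by exact_mod_cast abs_moebius_le_one)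
          (by exact_mod_cast Nat.abs_cast_div_sub_div_le_one n (d ^ 2)) (abs_nonneg _) zero_le_one
    _ = n.sqrt := by simp

end ArithmeticFunction

theorem squarefree_density :
    Filter.Tendsto
      (fun n : ℕ => (∑ k ∈ Finset.Icc 1 n, |(ArithmeticFunction.moebius k : ℝ)|) / n)
      Filter.atTop (nhds (6 / Real.pi ^ 2)) := by
  have hpartial : Tendsto (fun n : ℕ => ∑ d ∈ Icc 1 n.sqrt, (μ d : ℝ) / d ^ 2) atTop
      (𝓝 (6 / π ^ 2)) :=
    (hasSum_moebius_div_sq.tendsto_sum_Icc_one (by simp)).comp Nat.tendsto_sqrt_atTop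
  refine hpartial.congr_dist (squeeze_zero (fun _ => dist_nonneg) (fun n => ?_)
    Nat.tendsto_sqrt_div_atTop_nhds_zero)
  rw [Real.dist_eq, abs_sub_comm]
  exact abs_sum_Icc_abs_moebius_div_sub_le n
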